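/- Let ℓ be an odd prime, let δ ∈ F_ℓ be a quadratic nonresidue, and let a, b ∈ F_ℓ with a ≠ 0 and with a² − δb² a quadratic nonresidue. Set h = [[0, δ],[1, 0]] and g = [[a, −δb],[b, −a]] (both invertible). Then the subgroup ⟨g, h⟩ of GL₂(F_ℓ) is contained in a conjugate of N_sp if and only if ℓ ≡ 1 (mod 4). -/

import Mathlib

/-!
The generators `g`, `h` and their product `gh` all have trace zero, and a trace-zero diagonal
matrix `diag(c, -c)` has `-det = c²`. Since `-det g = a² - δb²` and `-det h = δ` are nonresidues,
in a conjugate of `N_sp` both `g` and `h` must be antidiagonal, so `gh` is diagonal and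
`-det (gh) = -δ(a² - δb²)` is a square; as `δ(a² - δb²)` is a nonzero square, this says that `-1`
is a square, i.e. `ℓ ≡ 1 (mod 4)`.

Conversely, if `-1` is a square then `gh` has two eigenvalues `±l` with `l ≠ 0`. For trace-zero
`2 × 2` matrices `AB + BA = tr(AB)`, so `g` and `h` anticommute with `gh`; in an eigenbasis of `gh`
this forces them to be antidiagonal, since `2l ≠ 0`.
-/

open Matrix

abbrev GL2 (ℓ : ℕ) : Type := GL (Fin 2) (ZMod ℓ)

/-- The underlying matrix of an element of `GL₂(F_ℓ)`. -/
def mat {ℓ : ℕ} (g : GL2 ℓ) : Matrix (Fin 2) (Fin 2) (ZMod ℓ) := g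

/-- `g` is a diagonal matrix. -/
def IsDiag {ℓ : ℕ} (g : GL2 ℓ) : Prop := mat g 0 1 = 0 ∧ mat g 1 0 = 0

/-- `g` is an antidiagonal matrix. -/
def IsAnti {ℓ : ℕ} (g : GL2 ℓ) : Prop := mat g 0 0 = 0 ∧ mat g 1 1 = 0

/-- `g` is a scalar matrix. -/
def IsScalar {ℓ : ℕ} (g : GL2 ℓ) : Prop :=
  ∃ c : ZMod ℓ, mat g = c • (1 : Matrix (Fin 2) (Fin 2) (ZMod ℓ))

/-- Membership in the split Cartan subgroup `C_sp` (the diagonal matrices). -/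
def InCsp {ℓ : ℕ} (g : GL2 ℓ) : Prop := IsDiag g

/-- Membership in the normalizer `N_sp` of the split Cartan (diagonal or antidiagonal). -/
def InNsp {ℓ : ℕ} (g : GL2 ℓ) : Prop := IsDiag g ∨ IsAnti g

/-- Membership in the nonsplit Cartan `C_ns` w.r.t. the nonresidue `δ`:
matrices of the form `[[a, δb], [b, a]]`. -/
def InCns {ℓ : ℕ} (δ : ZMod ℓ) (g : GL2 ℓ) : Prop :=
  mat g 1 1 = mat g 0 0 ∧ mat g 0 1 = δ * mat g 1 0

/-- Membership in `N_ns \ C_ns` (as a matrix shape): `[[a, -δb], [b, -a]]`. -/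
def InNnsAnti {ℓ : ℕ} (δ : ZMod ℓ) (g : GL2 ℓ) : Prop :=
  mat g 1 1 = - mat g 0 0 ∧ mat g 0 1 = - (δ * mat g 1 0)

/-- Membership in the normalizer `N_ns` of the nonsplit Cartan. -/
def InNns {ℓ : ℕ} (δ : ZMod ℓ) (g : GL2 ℓ) : Prop := InCns δ g ∨ InNnsAnti δ g

/-- `PGL₂(F_ℓ)`: the quotient of `GL₂(F_ℓ)` by its center (the scalar matrices). -/
abbrev PGL2 (ℓ : ℕ) : Type := GL2 ℓ ⧸ Subgroup.center (GL2 ℓ)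

/-- The natural projection `GL₂(F_ℓ) →* PGL₂(F_ℓ)`. -/
def toPGL (ℓ : ℕ) : GL2 ℓ →* PGL2 ℓ := QuotientGroup.mk' _

/-- The image of a subgroup of `GL₂(F_ℓ)` in `PGL₂(F_ℓ)`. -/
def projImage {ℓ : ℕ} (G : Subgroup (GL2 ℓ)) : Subgroup (PGL2 ℓ) := G.map (toPGL ℓ)

/-- `H` is isomorphic to the alternating group `A₄`. -/
def IsA4 {ℓ : ℕ} (H : Subgroup (PGL2 ℓ)) : Prop := Nonempty (H ≃* alternatingGroup (Fin 4))

/-- `H` is isomorphic to the symmetric group `S₄`. -/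
def IsS4 {ℓ : ℕ} (H : Subgroup (PGL2 ℓ)) : Prop := Nonempty (H ≃* Equiv.Perm (Fin 4))

/-- `H` is isomorphic to the alternating group `A₅`. -/
def IsA5 {ℓ : ℕ} (H : Subgroup (PGL2 ℓ)) : Prop := Nonempty (H ≃* alternatingGroup (Fin 5))

section TraceZero

variable {R : Type*} [CommRing R]

theorem Matrix.mul_add_mul_eq_trace_smul_one {A B : Matrix (Fin 2) (Fin 2) R}
    (hA : A.trace = 0) (hB : B.trace = 0) : A * B + B * A = (A * B).trace • 1 := by
  rw [trace_fin_two, add_eq_zero_iff_eq_neg'] at hA hB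
  ext i j
  fin_cases i <;> fin_cases j <;>
    simp [mul_apply, Fin.sum_univ_two, trace_fin_two, hA, hB] <;> ring

theorem Matrix.apply_self_eq_zero_of_mul_diagonal_eq_neg {n : Type*} [Fintype n] [DecidableEq n]
    [NoZeroDivisors R] {A : Matrix n n R} {d : n → R} (h : A * diagonal d = -(diagonal d * A))
    {i : n} (hi : 2 * d i ≠ 0) : A i i = 0 := by
  have hii := congrFun (congrFun h i) i
  simp only [mul_diagonal, neg_apply, diagonal_mul] at hii
  exact (mul_eq_zero.mp (by linear_combination hii : 2 * d i * A i i = 0)).resolve_left hi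

theorem Matrix.mul_eigenvectors_fin_two {α β γ l : R} (hl : l * l = α * α + β * γ) :
    !![α, β; γ, -α] * !![β, β; l - α, -l - α] =
      !![β, β; l - α, -l - α] * diagonal ![l, -l] := by
  rw [diagonal_fin_two, mul_fin_two, mul_fin_two]
  simp only [EmbeddingLike.apply_eq_iff_eq, vecCons_inj, and_true, cons_val_zero, cons_val_one]
  exact ⟨⟨by ring, by ring⟩, by linear_combination -hl, by linear_combination -hl⟩

theorem Matrix.units_conj_mul_eq_neg {n : Type*} [Fintype n] [DecidableEq n]
    (x : (Matrix n n R)ˣ) {A M : Matrix n n R} (h : A * M = -(M * A)) :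
    (x * A * x⁻¹ : Matrix n n R) * (x * M * x⁻¹) =
      -((x * M * x⁻¹ : Matrix n n R) * (x * A * x⁻¹)) := by
  simp only [Matrix.mul_assoc, x.inv_mul_cancel_left]
  rw [← Matrix.mul_assoc A, h, Matrix.neg_mul, Matrix.mul_neg, Matrix.mul_assoc M]

theorem Matrix.exists_conj_diag_eq_zero_of_trace_eq_zero {K : Type*} [Field K]
    {A B : Matrix (Fin 2) (Fin 2) K} (h2 : (2 : K) ≠ 0) (hA : A.trace = 0) (hB : B.trace = 0)
    (hAB : (A * B).trace = 0) (h01 : (A * B) 0 1 ≠ 0) {l : K} (hl0 : l ≠ 0)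
    (hl : l * l = -(A * B).det) :
    ∃ x : GL (Fin 2) K, ∀ i, (x * A * x⁻¹ : Matrix (Fin 2) (Fin 2) K) i i = 0 ∧
      (x * B * x⁻¹ : Matrix (Fin 2) (Fin 2) K) i i = 0 := by
  set M := A * B
  have hBA : B * A = -M :=
    eq_neg_of_add_eq_zero_right <| by rw [mul_add_mul_eq_trace_smul_one hA hB, hAB, zero_smul]
  have hAM : A * M = -(M * A) := by rw [Matrix.mul_assoc, hBA, Matrix.mul_neg, neg_neg]
  have hBM : B * M = -(M * B) := by rw [← Matrix.mul_assoc, hBA, Matrix.neg_mul]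
  set α := M 0 0
  set β := M 0 1
  set γ := M 1 0
  have hM_eq : M = !![α, β; γ, -α] := by
    rw [trace_fin_two, add_eq_zero_iff_eq_neg'] at hAB
    rw [← hAB]; exact eta_fin_two M
  set P : Matrix (Fin 2) (Fin 2) K := !![β, β; l - α, -l - α]
  have hMP : M * P = P * diagonal ![l, -l] := by
    rw [hM_eq]
    exact mul_eigenvectors_fin_two (by rw [hl, hM_eq, det_fin_two_of]; ring)
  have hP : P.det ≠ 0 := by
    rw [det_fin_two_of, show β * (-l - α) - β * (l - α) = -(2 * β * l) by ring]
    exact neg_ne_zero.mpr (mul_ne_zero (mul_ne_zero h2 h01) hl0)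
  set u := GeneralLinearGroup.mkOfDetNeZero P hP
  have hD : (u⁻¹ * M * u : Matrix (Fin 2) (Fin 2) K) = diagonal ![l, -l] := by
    have hu : (u : Matrix (Fin 2) (Fin 2) K) = P := rfl
    rw [Matrix.mul_assoc, hu, hMP, ← Matrix.mul_assoc, ← hu, u.inv_mul, Matrix.one_mul]
  have h2l : ∀ i, 2 * ![l, -l] i ≠ 0 := by
    simp [Fin.forall_fin_two, h2, hl0]
  refine ⟨u⁻¹, fun i => ⟨?_, ?_⟩⟩ <;> rw [inv_inv] <;>
    refine apply_self_eq_zero_of_mul_diagonal_eq_neg ?_ (h2l i) <;> rw [← hD]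
  · exact units_conj_mul_eq_neg u⁻¹ hAM
  · exact units_conj_mul_eq_neg u⁻¹ hBM

end TraceZero

theorem ne_zero_of_not_isSquare {M : Type*} [MulZeroClass M] {a : M} (ha : ¬IsSquare a) :
    a ≠ 0 :=
  fun h => ha (h ▸ .zero)

theorem FiniteField.isSquare_mul_of_not_isSquare {F : Type*} [Field F] [Fintype F]
    [DecidableEq F] {a b : F} (ha : ¬IsSquare a) (hb : ¬IsSquare b) : IsSquare (a * b) := by
  have hab : a * b ≠ 0 := mul_ne_zero (ne_zero_of_not_isSquare ha) (ne_zero_of_not_isSquare hb)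
  rw [← quadraticChar_one_iff_isSquare hab, map_mul,
    quadraticChar_neg_one_iff_not_isSquare.mpr ha, quadraticChar_neg_one_iff_not_isSquare.mpr hb]
  norm_num

theorem isSquare_neg_iff_isSquare_neg_one {K : Type*} [Field K] {a : K} (ha : IsSquare a)
    (ha0 : a ≠ 0) : IsSquare (-a) ↔ IsSquare (-1 : K) := by
  refine ⟨fun h => ?_, fun h => neg_one_mul a ▸ h.mul ha⟩
  simpa [neg_div, ha0] using h.div ha

section SplitCartanNormalizer

variable {ℓ : ℕ}

theorem mat_mul_apply (x y : GL2 ℓ) (i j : Fin 2) :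
    mat (x * y) i j = mat x i 0 * mat y 0 j + mat x i 1 * mat y 1 j := by
  simp [mat, mul_apply, Fin.sum_univ_two]

theorem mat_inv (x : GL2 ℓ) :
    mat x⁻¹ = Ring.inverse (mat x).det • !![mat x 1 1, -mat x 0 1; -mat x 1 0, mat x 0 0] := by
  rw [mat, coe_units_inv, inv_def, adjugate_fin_two]; rfl

theorem IsDiag.mul {x y : GL2 ℓ} (hx : IsDiag x) (hy : IsDiag y) : IsDiag (x * y) := by
  constructor <;> simp [mat_mul_apply, hx.1, hx.2, hy.1, hy.2]

theorem IsDiag.mul_isAnti {x y : GL2 ℓ} (hx : IsDiag x) (hy : IsAnti y) : IsAnti (x * y) := by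
  constructor <;> simp [mat_mul_apply, hx.1, hx.2, hy.1, hy.2]

theorem IsAnti.mul_isDiag {x y : GL2 ℓ} (hx : IsAnti x) (hy : IsDiag y) : IsAnti (x * y) := by
  constructor <;> simp [mat_mul_apply, hx.1, hx.2, hy.1, hy.2]

theorem IsAnti.mul {x y : GL2 ℓ} (hx : IsAnti x) (hy : IsAnti y) : IsDiag (x * y) := by
  constructor <;> simp [mat_mul_apply, hx.1, hx.2, hy.1, hy.2]

theorem IsDiag.inv {x : GL2 ℓ} (hx : IsDiag x) : IsDiag x⁻¹ := by
  constructor <;> simp [mat_inv, hx.1, hx.2]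

theorem IsAnti.inv {x : GL2 ℓ} (hx : IsAnti x) : IsAnti x⁻¹ := by
  constructor <;> simp [mat_inv, hx.1, hx.2]

variable (ℓ) in
def splitCartanNormalizer : Subgroup (GL2 ℓ) where
  carrier := {y | InNsp y}
  one_mem' := Or.inl ⟨rfl, rfl⟩
  mul_mem' := by
    rintro x y (hx | hx) (hy | hy)
    exacts [.inl (hx.mul hy), .inr (hx.mul_isAnti hy), .inr (hx.mul_isDiag hy), .inl (hx.mul hy)]
  inv_mem' := by
    rintro x (hx | hx)
    exacts [.inl hx.inv, .inr hx.inv]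

theorem forall_mem_closure_inNsp_conj_iff (x : GL2 ℓ) (S : Set (GL2 ℓ)) :
    (∀ y ∈ Subgroup.closure S, InNsp (x * y * x⁻¹)) ↔ ∀ s ∈ S, InNsp (x * s * x⁻¹) :=
  Subgroup.closure_le ((splitCartanNormalizer ℓ).comap (MulAut.conj x).toMonoidHom)

theorem trace_mat_conj (x y : GL2 ℓ) : (mat (x * y * x⁻¹)).trace = (mat y).trace :=
  trace_units_conj x (mat y)

theorem det_mat_conj (x y : GL2 ℓ) : (mat (x * y * x⁻¹)).det = (mat y).det :=
  det_units_conj x (mat y)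

theorem isSquare_neg_det_of_isDiag {y : GL2 ℓ} (hy : IsDiag y) (htr : (mat y).trace = 0) :
    IsSquare (-(mat y).det) := by
  rw [trace_fin_two, add_eq_zero_iff_eq_neg'] at htr
  exact ⟨mat y 0 0, by rw [det_fin_two, hy.1, htr]; ring⟩

theorem isAnti_of_inNsp {y : GL2 ℓ} (hy : InNsp y) (htr : (mat y).trace = 0)
    (hdet : ¬IsSquare (-(mat y).det)) : IsAnti y :=
  hy.resolve_left fun hd => hdet (isSquare_neg_det_of_isDiag hd htr)

end SplitCartanNormalizer

/-- For `h = [[0, δ],[1, 0]]` and `g = [[a, -δb],[b, -a]]` with `a ≠ 0`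
and `a² - δb²` a nonresidue, the subgroup `⟨g, h⟩` is contained in a conjugate of
`N_sp` if and only if `ℓ ≡ 1 (mod 4)`. -/
theorem two_generator_in_conj_Nsp_iff
    {ℓ : ℕ} [Fact ℓ.Prime] (hℓ : ℓ ≠ 2)
    (δ : ZMod ℓ) (hδ : ¬ IsSquare δ) (a b : ZMod ℓ) (ha : a ≠ 0)
    (hnr : ¬ IsSquare (a ^ 2 - δ * b ^ 2))
    (g h : GL2 ℓ) (hgm : mat g = !![a, -(δ * b); b, -a]) (hhm : mat h = !![0, δ; 1, 0]) :
    (∃ x : GL2 ℓ, ∀ y ∈ Subgroup.closure {g, h}, InNsp (x * y * x⁻¹)) ↔ ℓ % 4 = 1 := by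
  have hgh : mat g * mat h = !![-(δ * b), a * δ; -a, δ * b] := by
    rw [hgm, hhm]; ext i j; fin_cases i <;> fin_cases j <;> simp [mul_comm]
  have htr_g : (mat g).trace = 0 := by simp [hgm, trace_fin_two]
  have htr_h : (mat h).trace = 0 := by simp [hhm, trace_fin_two]
  have htr_gh : (mat g * mat h).trace = 0 := by simp [hgh, trace_fin_two]
  have hdet_g : -(mat g).det = a ^ 2 - δ * b ^ 2 := by rw [hgm, det_fin_two_of]; ring
  have hdet_h : -(mat h).det = δ := by rw [hhm, det_fin_two_of]; ring
  have hdet_gh : (mat g * mat h).det = δ * (a ^ 2 - δ * b ^ 2) := by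
    rw [det_mul, ← neg_mul_neg, hdet_g, hdet_h, mul_comm]
  have hdet_gh0 : (mat g * mat h).det ≠ 0 := hdet_gh ▸
    mul_ne_zero (ne_zero_of_not_isSquare hδ) (ne_zero_of_not_isSquare hnr)
  have hmod : ℓ % 4 = 1 ↔ IsSquare (-(mat g * mat h).det) := by
    have hsq := hdet_gh ▸ FiniteField.isSquare_mul_of_not_isSquare hδ hnr
    rw [isSquare_neg_iff_isSquare_neg_one hsq hdet_gh0, ZMod.exists_sq_eq_neg_one_iff]
    have := Nat.odd_iff.mp ((Fact.out : ℓ.Prime).odd_of_ne_two hℓ)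
    omega
  simp only [forall_mem_closure_inNsp_conj_iff, Set.forall_mem_insert, Set.mem_singleton_iff,
    forall_eq, hmod]
  constructor
  · rintro ⟨x, hxg, hxh⟩
    have hg := isAnti_of_inNsp hxg (by rwa [trace_mat_conj]) (by rwa [det_mat_conj, hdet_g])
    have hh := isAnti_of_inNsp hxh (by rwa [trace_mat_conj]) (by rwa [det_mat_conj, hdet_h])
    have hsq := isSquare_neg_det_of_isDiag (hg.mul hh) (by rwa [conj_mul, trace_mat_conj])
    rwa [conj_mul, det_mat_conj] at hsq
  · rintro ⟨l, hl⟩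
    have hl0 : l ≠ 0 := by rintro rfl; exact hdet_gh0 (by simpa using hl)
    have h01 : (mat g * mat h) 0 1 ≠ 0 := by
      simpa [hgh] using mul_ne_zero ha (ne_zero_of_not_isSquare hδ)
    obtain ⟨x, hx⟩ := exists_conj_diag_eq_zero_of_trace_eq_zero
      (Ring.two_ne_zero (by rwa [ZMod.ringChar_zmod_n])) htr_g htr_h htr_gh h01 hl0 hl.symm
    exact ⟨x, .inr ⟨(hx 0).1, (hx 1).1⟩, .inr ⟨(hx 0).2, (hx 1).2⟩⟩
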